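/- Let F be a number field with ring of integers O, let n ≥ 1, and let 𝔞 be a nonzero fractional ideal of O. Define Λ_{𝔞,n} ⊆ Mat_n(F) to be the set of n×n matrices (x_{ij}) with x_{ij} ∈ O for 1 ≤ i,j ≤ n−1, x_{in} ∈ 𝔞^{-1} for 1 ≤ i ≤ n−1, x_{nj} ∈ 𝔞 for 1 ≤ j ≤ n−1, and x_{nn} ∈ O. Then Λ_{𝔞,n} is a maximal O-order in Mat_n(F). -/

import Mathlib

/-! With `J = (1, …, 1, 𝔞)`, the entry ideals of `Λ_{𝔞,n}` are `J i / J j`, so `Λ_{𝔞,n}` is the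
endomorphism ring of the lattice `𝓞 F ^ (n - 1) ⊕ 𝔞`: a finitely generated subalgebra spanning
`Mat_n(F)`. If an order `S` contains it and `x ∈ S`, then for `b ∈ J j / J i` the matrix
`E_ii · x · b E_ji = (x i j * b) E_ii` lies in `S`, so all powers of `x i j * b` lie in a finitely
generated `𝓞 F`-module. Hence `x i j * b` is integral, so lies in `𝓞 F`, and therefore
`x i j ∈ (J j / J i)⁻¹ = J i / J j`. -/

open scoped NumberField nonZeroDivisors

section

variable {F : Type*} [Field F] [NumberField F]

/-- The fractional ideal prescribing the `(i,j)` entry of the standard maximal order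
`Λ_{𝔞,n}` in `Mat_n(F)`: entries are in `𝓞 F` except in the last column (in `𝔞⁻¹`) and the
last row (in `𝔞`), with the `(n,n)` corner in `𝓞 F`. -/
noncomputable def entryIdeal (𝔞 : FractionalIdeal (𝓞 F)⁰ F) (n : ℕ) (i j : Fin n) :
    FractionalIdeal (𝓞 F)⁰ F :=
  if i.val = n - 1 then (if j.val = n - 1 then 1 else 𝔞) else (if j.val = n - 1 then 𝔞⁻¹ else 1)

/-- The standard ("nice form") maximal order `Λ_{𝔞,n}` in `Mat_n(F)`. -/
noncomputable def stdOrder (𝔞 : FractionalIdeal (𝓞 F)⁰ F) (n : ℕ) :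
    Set (Matrix (Fin n) (Fin n) F) :=
  {x | ∀ i j, x i j ∈ entryIdeal 𝔞 n i j}

/-- An `𝓞 F`-order of full rank in `Mat_n(F)`: a subring, stable under `𝓞 F`, finitely
generated as an `𝓞 F`-module, and spanning `Mat_n(F)` over `F`. -/
def IsOrderSet {n : ℕ} (S : Set (Matrix (Fin n) (Fin n) F)) : Prop :=
  (1 : Matrix (Fin n) (Fin n) F) ∈ S ∧
  (∀ x ∈ S, ∀ y ∈ S, x + y ∈ S) ∧ (∀ x ∈ S, -x ∈ S) ∧
  (∀ x ∈ S, ∀ y ∈ S, x * y ∈ S) ∧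
  (∀ r : 𝓞 F, ∀ x ∈ S, r • x ∈ S) ∧
  (∃ t : Finset (Matrix (Fin n) (Fin n) F), (t : Set (Matrix (Fin n) (Fin n) F)) ⊆ S ∧
    S ⊆ (Submodule.span (𝓞 F) (t : Set (Matrix (Fin n) (Fin n) F)) : Set (Matrix (Fin n) (Fin n) F))) ∧
  Submodule.span F S = ⊤

/-- A maximal `𝓞 F`-order in `Mat_n(F)`. -/
def IsMaximalOrderSet {n : ℕ} (S : Set (Matrix (Fin n) (Fin n) F)) : Prop :=
  IsOrderSet S ∧ ∀ S' : Set (Matrix (Fin n) (Fin n) F), IsOrderSet S' → S ⊆ S' → S' = S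

end

theorem IsIntegral.of_forall_pow_mem {R A : Type*} [CommRing R] [IsNoetherianRing R] [CommRing A]
    [Algebra R A] {M : Submodule R A} (hM : M.FG) {c : A} (hc : ∀ k : ℕ, c ^ k ∈ M) :
    IsIntegral R c := by
  refine .of_mem_of_fg (Algebra.adjoin R {c}) (hM.of_le ?_) c
    (Algebra.self_mem_adjoin_singleton R c)
  rw [Algebra.adjoin_eq_span, Submonoid.closure_singleton_eq, Submodule.span_le]
  rintro _ ⟨k, rfl⟩
  exact hc k

namespace FractionalIdeal

variable {R P : Type*} [CommRing R] {S : Submonoid R} [CommRing P] [Algebra R P]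

instance : AddSubmonoidClass (FractionalIdeal S P) P where
  add_mem {I} _ _ := (I : Submodule R P).add_mem
  zero_mem I := (I : Submodule R P).zero_mem

theorem mem_of_forall_mul_inv_mem_one [IsLocalization S P] {u : (FractionalIdeal S P)ˣ} {x : P}
    (h : ∀ y ∈ (↑u⁻¹ : FractionalIdeal S P), x * y ∈ (1 : FractionalIdeal S P)) :
    x ∈ (u : FractionalIdeal S P) := by
  have hx : spanSingleton S x * ↑u⁻¹ ≤ 1 := by
    rw [mul_le]
    intro z hz y hy
    obtain ⟨r, rfl⟩ := (mem_spanSingleton S).mp hz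
    rw [smul_mul_assoc]
    exact Submodule.smul_mem _ r (h y hy)
  refine spanSingleton_le_iff_mem.mp ?_
  calc spanSingleton S x = spanSingleton S x * ↑u⁻¹ * u := (Units.inv_mul_cancel_right _ _).symm
    _ ≤ 1 * u := mul_left_mono hx
    _ = u := one_mul _

end FractionalIdeal

namespace Matrix

theorem isIntegral_of_single_mem {R A ι : Type*} [CommRing R] [IsNoetherianRing R] [CommRing A]
    [Algebra R A] [Fintype ι] [DecidableEq ι] {S : Set (Matrix ι ι A)}
    (hS : ∀ x ∈ S, ∀ y ∈ S, x * y ∈ S) {M : Submodule R (Matrix ι ι A)} (hM : M.FG)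
    (hSM : S ⊆ M) {i : ι} (h1 : single i i 1 ∈ S) {c : A} (hc : single i i c ∈ S) :
    IsIntegral R c := by
  have hpow : ∀ k : ℕ, single i i (c ^ k) ∈ S := by
    intro k
    induction k with
    | zero => simpa using h1
    | succ k ih => simpa [pow_succ] using hS _ ih _ hc
  exact .of_forall_pow_mem (hM.map (entryLinearMap R A i i))
    fun k => ⟨_, hSM (hpow k), single_apply_same i i _⟩

variable {R K : Type*} [CommRing R] [Field K] [Algebra R K] {ι : Type*} [Fintype ι] [DecidableEq ι]

/-- The endomorphism ring of the lattice `⨁ i, J i` in `K^ι`: a matrix `x` maps it to itself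
iff `x i j * J j ⊆ J i` for all `i, j`. -/
def endOrder (J : ι → (FractionalIdeal R⁰ K)ˣ) : Subalgebra R (Matrix ι ι K) where
  carrier := {x | ∀ i j, x i j ∈ ((J i / J j : (FractionalIdeal R⁰ K)ˣ) : FractionalIdeal R⁰ K)}
  mul_mem' {x y} hx hy i k := by
    refine sum_mem fun j _ => ?_
    rw [← div_mul_div_cancel (J i) (J j) (J k), Units.val_mul]
    exact FractionalIdeal.mul_mem_mul (hx i j) (hy j k)
  add_mem' hx hy i j := add_mem (hx i j) (hy i j)
  algebraMap_mem' r i j := by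
    rw [algebraMap_matrix_apply]
    split_ifs with hij
    · rw [hij, div_self', Units.val_one]
      exact (FractionalIdeal.mem_one_iff _).mpr ⟨r, rfl⟩
    · exact zero_mem _

variable {J : ι → (FractionalIdeal R⁰ K)ˣ}

theorem single_mem_endOrder {i j : ι} {a : K}
    (ha : a ∈ ((J i / J j : (FractionalIdeal R⁰ K)ˣ) : FractionalIdeal R⁰ K)) :
    single i j a ∈ endOrder J := by
  intro k l
  rcases eq_or_ne (i, j) (k, l) with h | h
  · obtain ⟨rfl, rfl⟩ := Prod.ext_iff.mp h
    rwa [single_apply_same]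
  · rw [single_apply_of_ne (h := fun h' => h (Prod.ext h'.1 h'.2))]
    exact zero_mem _

theorem single_one_mem_endOrder (i : ι) : single i i 1 ∈ endOrder J :=
  single_mem_endOrder (by rw [div_self', Units.val_one]; exact FractionalIdeal.one_mem_one _)

theorem toSubmodule_endOrder : Subalgebra.toSubmodule (endOrder J) =
    ⨆ i, ⨆ j, ((J i / J j : (FractionalIdeal R⁰ K)ˣ) : Submodule R K).map
      (singleLinearMap R i j) := by
  refine le_antisymm (fun x hx => ?_) (iSup_le fun i => iSup_le fun j => ?_)
  · rw [matrix_eq_sum_single x]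
    exact sum_mem fun i _ => sum_mem fun j _ => Submodule.mem_iSup_of_mem i <|
      Submodule.mem_iSup_of_mem j <| Submodule.mem_map_of_mem (hx i j)
  · exact Submodule.map_le_iff_le_comap.mpr fun a ha => single_mem_endOrder ha

theorem fg_endOrder [IsFractionRing R K] : (Subalgebra.toSubmodule (endOrder J)).FG := by
  rw [toSubmodule_endOrder]
  exact Submodule.fg_iSup _ fun i => Submodule.fg_iSup _ fun j =>
    (FractionalIdeal.fg_unit _).map _

theorem span_endOrder_eq_top [IsFractionRing R K] :
    Submodule.span K (endOrder J : Set (Matrix ι ι K)) = ⊤ := by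
  refine eq_top_iff.mpr fun x _ => ?_
  rw [matrix_eq_sum_single x]
  refine sum_mem fun i _ => sum_mem fun j _ => ?_
  obtain ⟨a, ha, ha0⟩ : ∃ a ∈ ((J i / J j : (FractionalIdeal R⁰ K)ˣ) : FractionalIdeal R⁰ K),
      a ≠ 0 := by
    by_contra! h
    exact (J i / J j).ne_zero (FractionalIdeal.eq_zero_iff.mpr h)
  rw [← div_mul_cancel₀ (x i j) ha0, ← smul_eq_mul, ← smul_single]
  exact Submodule.smul_mem _ _ (Submodule.subset_span (single_mem_endOrder ha))

theorem subset_endOrder_of_mul_mem [IsDomain R] [IsNoetherianRing R] [IsIntegrallyClosed R]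
    [IsFractionRing R K] {S : Set (Matrix ι ι K)} (hS : ∀ x ∈ S, ∀ y ∈ S, x * y ∈ S)
    {M : Submodule R (Matrix ι ι K)} (hM : M.FG) (hSM : S ⊆ M) (hJS : ↑(endOrder J) ⊆ S) :
    S ⊆ endOrder J := by
  intro x hx i j
  refine FractionalIdeal.mem_of_forall_mul_inv_mem_one fun b hb => ?_
  rw [inv_div] at hb
  have h1 := hJS (single_one_mem_endOrder i)
  have hxb : single i i (x i j * b) ∈ S := by
    simpa using hS _ (hS _ h1 _ hx) _ (hJS (single_mem_endOrder hb))
  exact (FractionalIdeal.mem_one_iff _).mpr <|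
    IsIntegrallyClosed.isIntegral_iff.mp (isIntegral_of_single_mem hS hM hSM h1 hxb)

end Matrix

theorem Subalgebra.isOrderSet {F : Type*} [Field F] {n : ℕ}
    (A : Subalgebra (𝓞 F) (Matrix (Fin n) (Fin n) F))
    (hfg : (Subalgebra.toSubmodule A).FG)
    (hspan : Submodule.span F (A : Set (Matrix (Fin n) (Fin n) F)) = ⊤) :
    IsOrderSet (A : Set (Matrix (Fin n) (Fin n) F)) := by
  obtain ⟨t, ht⟩ := hfg
  refine ⟨A.one_mem, fun _ hx _ hy => A.add_mem hx hy, fun _ => A.neg_mem,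
    fun _ hx _ hy => A.mul_mem hx hy, fun r _ hx => A.smul_mem hx r,
    ⟨t, ?_, ?_⟩, hspan⟩ <;> rw [← A.coe_toSubmodule, ← ht]
  exacts [Submodule.subset_span, subset_rfl]

section

variable {F : Type*} [Field F] [NumberField F]

theorem stdOrder_eq_endOrder {𝔞 : FractionalIdeal (𝓞 F)⁰ F} (h𝔞 : 𝔞 ≠ 0) (n : ℕ) :
    stdOrder 𝔞 n =
      Matrix.endOrder fun i : Fin n => if i.val = n - 1 then Units.mk0 𝔞 h𝔞 else 1 := by
  ext x
  refine forall₂_congr fun i j => ?_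
  by_cases hi : i.val = n - 1 <;> by_cases hj : j.val = n - 1 <;> simp [entryIdeal, hi, hj]

theorem stdOrder_isMaximalOrder_general (𝔞 : FractionalIdeal (𝓞 F)⁰ F) (h𝔞 : 𝔞 ≠ 0) (n : ℕ) :
    IsMaximalOrderSet (stdOrder 𝔞 n) := by
  rw [stdOrder_eq_endOrder h𝔞]
  set Λ := Matrix.endOrder fun i : Fin n => if i.val = n - 1 then Units.mk0 𝔞 h𝔞 else 1
  refine ⟨Λ.isOrderSet Matrix.fg_endOrder Matrix.span_endOrder_eq_top, fun S hS hΛS => ?_⟩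
  obtain ⟨-, -, -, hmul, -, ⟨t, -, hSt⟩, -⟩ := hS
  exact (Matrix.subset_endOrder_of_mul_mem hmul (Submodule.fg_span t.finite_toSet) hSt
    hΛS).antisymm hΛS

/-- **Proposition 5.1 (first part).** `Λ_{𝔞,n}` is a maximal `𝓞 F`-order in `Mat_n(F)`. -/
theorem stdOrder_isMaximalOrder (𝔞 : FractionalIdeal (𝓞 F)⁰ F) (h𝔞 : 𝔞 ≠ 0) (n : ℕ)
    (hn : 1 ≤ n) :
    IsMaximalOrderSet (stdOrder 𝔞 n) :=
  stdOrder_isMaximalOrder_general 𝔞 h𝔞 n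

end
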